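/- Lemma 2: Let k be the equal opportunity control. For every game (X, λ_w, p, G, v_q, v_u, ω) and every cost-threshold pair c̄ = (c̄(w), c̄(b)), one has 𝒮_k(μ_RE, f_RE) ⊆ ℱ ⊆ k(X, μ_RE, f_RE), where 𝒮_k(μ_RE, f_RE) := argmax_{d ∈ k(X, μ_RE, f_RE)} U_F(d, μ_RE, f_RE) and ℱ is the set of fair decision policies. In words: every firm-optimal policy under the equal opportunity control is fair, and every fair policy satisfies the equal opportunity constraint. -/

import Mathlib

/-!
Formalization of the Coate–Loury statistical discrimination model with
machine-learning (contractible) beliefs, following Zhu,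
"The Impact of Equal Opportunity on Statistical Discrimination".
-/

open scoped BigOperators
open MeasureTheory

noncomputable section

attribute [local instance] Classical.propDecidable

/-- Group identities `I = {w, b}`. -/
inductive GrpI
  | w
  | b
deriving DecidableEq

instance : Fintype GrpI := ⟨{GrpI.w, GrpI.b}, fun x => by cases x <;> simp⟩

/-- Classes `Y = {q, u}` (qualified / unqualified). -/
inductive Cls
  | q
  | u
deriving DecidableEq

instance : Fintype Cls := ⟨{Cls.q, Cls.u}, fun x => by cases x <;> simp⟩

/-- A game `(X, λ_w, p, G, v_q, v_u, ω)` of the Coate–Loury model.  The set of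
other features is the finite product `X = X_1 × ⋯ × X_N`, encoded as the pi type
`(j : Fin N) → Xs j`.  The statistical model (Assumption 1) is encoded through a
nonempty subset `Ysub ⊆ {1, …, N}` together with the factorization
`p(x | i, y) = pY(x_𝒴 | y) · pC(x_{-𝒴} | i, x_𝒴)`.  The cost distribution is
given by an everywhere positive density `g` with `∫ g = 1` and `∫ |c| g(c) dc < ∞`. -/
structure Game (N : ℕ) (Xs : Fin N → Type) [∀ j, Fintype (Xs j)]
    [∀ j, Nonempty (Xs j)] where
  lamw : ℝ
  lamw_pos : 0 < lamw
  lamw_lt_one : lamw < 1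
  Ysub : Finset (Fin N)
  Ysub_nonempty : Ysub.Nonempty
  pY : ((j : Ysub) → Xs j.1) → Cls → ℝ
  pC : GrpI → ((j : Fin N) → Xs j) → ℝ
  pY_pos : ∀ xY y, 0 < pY xY y
  pC_pos : ∀ i x, 0 < pC i x
  pY_sum : ∀ y, ∑ xY, pY xY y = 1
  pC_sum : ∀ (i : GrpI) (xY : (j : Ysub) → Xs j.1),
    ∑ x ∈ Finset.univ.filter
        (fun x : (j : Fin N) → Xs j => (fun j : Ysub => x j.1) = xY),
      pC i x = 1
  g : ℝ → ℝ
  g_pos : ∀ c, 0 < g c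
  g_int : Integrable g
  g_norm : (∫ c, g c) = 1
  g_abs_int : Integrable fun c => |c| * g c
  vq : ℝ
  vu : ℝ
  om : ℝ
  vq_pos : 0 < vq
  vu_pos : 0 < vu
  om_pos : 0 < om

section Policies

variable {N : ℕ} {Xs : Fin N → Type}

/-- A decision policy `d : I × X → [0,1]`. -/
def IsPolicy (d : GrpI → ((j : Fin N) → Xs j) → ℝ) : Prop :=
  ∀ i x, d i x ∈ Set.Icc (0 : ℝ) 1

/-- A decision policy when data is color-blind, `d_cb : X → [0,1]`. -/
def IsCbPolicy (dcb : ((j : Fin N) → Xs j) → ℝ) : Prop :=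
  ∀ x, dcb x ∈ Set.Icc (0 : ℝ) 1

/-- `S ⊆ {1, …, N}` has the dependence property for the belief `f`:
`f` depends on `(i, x)` only up to `(i, x_S)`. -/
def DepProp {I : Type} (f : I → ((j : Fin N) → Xs j) → ℝ)
    (S : Finset (Fin N)) : Prop :=
  ∀ (i : I) (x x' : (j : Fin N) → Xs j), (∀ j ∈ S, x j = x' j) → f i x = f i x'

/-- The minimal subset `Ŷ(f)` with the dependence property. -/
def minDep {I : Type} (f : I → ((j : Fin N) → Xs j) → ℝ) : Finset (Fin N) :=
  Finset.univ.filter fun j => ∀ S : Finset (Fin N), DepProp f S → j ∈ S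

variable [∀ j, Fintype (Xs j)]

/-- Full-support probability distributions on `I × X` (the set `Δ°(I × X)`). -/
def FullSupp (μ : GrpI → ((j : Fin N) → Xs j) → ℝ) : Prop :=
  (∀ i x, 0 < μ i x) ∧ ∑ i, ∑ x, μ i x = 1

/-- Beliefs valued in `(0, 1)`. -/
def OpenBelief (f : GrpI → ((j : Fin N) → Xs j) → ℝ) : Prop :=
  ∀ i x, f i x ∈ Set.Ioo (0 : ℝ) 1

/-- Acceptance rate of group `i`. -/
def AR (i : GrpI) (d μ : GrpI → ((j : Fin N) → Xs j) → ℝ) : ℝ :=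
  (∑ x, d i x * μ i x) / ∑ x, μ i x

/-- True positive rate of group `i`. -/
def TP (i : GrpI) (d μ f : GrpI → ((j : Fin N) → Xs j) → ℝ) : ℝ :=
  (∑ x, d i x * μ i x * f i x) / ∑ x, μ i x * f i x

/-- The equal opportunity control `k(X, μ, f)`. -/
def EOset (μ f : GrpI → ((j : Fin N) → Xs j) → ℝ) :
    Set (GrpI → ((j : Fin N) → Xs j) → ℝ) :=
  {d | IsPolicy d ∧ TP GrpI.w d μ f = TP GrpI.b d μ f}

/-- The color-blind control: all color-blind decision policies. -/
def CBset : Set (GrpI → ((j : Fin N) → Xs j) → ℝ) :=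
  {d | IsPolicy d ∧ ∀ x, d GrpI.w x = d GrpI.b x}

/-- The no proxies control: policies depending on `(i,x)` only through `x_{Ŷ(f)}`. -/
def NoProxies (_μ f : GrpI → ((j : Fin N) → Xs j) → ℝ) :
    Set (GrpI → ((j : Fin N) → Xs j) → ℝ) :=
  {d | IsPolicy d ∧
    ∀ i i' x x', (∀ j ∈ minDep f, x j = x' j) → d i x = d i' x'}

/-- `ℓ²` distance between decision policies. -/
def polDist (d d' : GrpI → ((j : Fin N) → Xs j) → ℝ) : ℝ :=
  Real.sqrt (∑ i, ∑ x, (d i x - d' i x) ^ 2)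

/-- `ℓ²` distance between pairs `(μ, f)`. -/
def pairDist (μ f μ' f' : GrpI → ((j : Fin N) → Xs j) → ℝ) : ℝ :=
  Real.sqrt ((∑ i, ∑ x, (μ i x - μ' i x) ^ 2) + ∑ i, ∑ x, (f i x - f' i x) ^ 2)

/-- `ℓ²` distance between strategy profiles `(c̄, d)`. -/
def profDist (c : GrpI → ℝ) (d : GrpI → ((j : Fin N) → Xs j) → ℝ)
    (c' : GrpI → ℝ) (d' : GrpI → ((j : Fin N) → Xs j) → ℝ) : ℝ :=
  Real.sqrt ((∑ i, (c i - c' i) ^ 2) + ∑ i, ∑ x, (d i x - d' i x) ^ 2)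

end Policies

/-- Upper hemicontinuity of a correspondence on a set. -/
def UpperHemicontinuousOnCorr {α β : Type*} [TopologicalSpace α] [TopologicalSpace β]
    (F : α → Set β) (S : Set α) : Prop :=
  ∀ a ∈ S, ∀ V : Set β, IsOpen V → F a ⊆ V → ∀ᶠ a' in nhdsWithin a S, F a' ⊆ V

/-- Lower hemicontinuity of a correspondence on a set. -/
def LowerHemicontinuousOnCorr {α β : Type*} [TopologicalSpace α] [TopologicalSpace β]
    (F : α → Set β) (S : Set α) : Prop :=
  ∀ a ∈ S, ∀ V : Set β, IsOpen V → (F a ∩ V).Nonempty →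
    ∀ᶠ a' in nhdsWithin a S, (F a' ∩ V).Nonempty

namespace Game

variable {N : ℕ} {Xs : Fin N → Type} [∀ j, Fintype (Xs j)] [∀ j, Nonempty (Xs j)]
variable (Γ : Game N Xs)

/-- Projection `x ↦ x_𝒴`. -/
def proj (x : (j : Fin N) → Xs j) : (j : Γ.Ysub) → Xs j.1 := fun j => x j.1

/-- `p(x | i, y) = p(x_𝒴 | y) · p(x_{-𝒴} | i, x_𝒴)`. -/
def p (i : GrpI) (x : (j : Fin N) → Xs j) (y : Cls) : ℝ :=
  Γ.pY (Γ.proj x) y * Γ.pC i x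

/-- Group probabilities `λ_w`, `λ_b = 1 - λ_w`. -/
def lam : GrpI → ℝ := fun i =>
  match i with
  | GrpI.w => Γ.lamw
  | GrpI.b => 1 - Γ.lamw

/-- The CDF `G` of the cost distribution. -/
def G (c : ℝ) : ℝ := ∫ t in Set.Iic c, Γ.g t

/-- The likelihood function `l(x) = p(x_𝒴 | q) / p(x_𝒴 | u)`. -/
def lhd (x : (j : Fin N) → Xs j) : ℝ :=
  Γ.pY (Γ.proj x) Cls.q / Γ.pY (Γ.proj x) Cls.u

/-- The likelihood function on `X_𝒴`. -/
def lhdY (xY : (j : Γ.Ysub) → Xs j.1) : ℝ := Γ.pY xY Cls.q / Γ.pY xY Cls.u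

/-- The set of likelihood values `{l_1 < … < l_n}`. -/
def LVset : Set ℝ := Set.range Γ.lhd

/-- The assumption that `1` is not a likelihood value
(equivalently, `WW` is single-peaked). -/
def OneNotLV : Prop := (1 : ℝ) ∉ Γ.LVset

/-- The largest likelihood value `l_n`. -/
def lmax : ℝ := sSup Γ.LVset

/-- `⌈ℓ⌉`: the smallest likelihood value `≥ ℓ`. -/
def lceil (ℓ : ℝ) : ℝ := sInf {v | v ∈ Γ.LVset ∧ ℓ ≤ v}

/-- `⌈ℓ⌉⁻`: the next smallest likelihood value below `⌈ℓ⌉` (or `l_0 = 0`). -/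
def lceilm (ℓ : ℝ) : ℝ := sSup (insert 0 {v | v ∈ Γ.LVset ∧ v < Γ.lceil ℓ})

/-- The smallest likelihood value `> ℓ`. -/
def lnext (ℓ : ℝ) : ℝ := sInf {v | v ∈ Γ.LVset ∧ ℓ < v}

/-- The true distribution of features `μ_RE` given cost thresholds `c̄`. -/
def muRE (c : GrpI → ℝ) (i : GrpI) (x : (j : Fin N) → Xs j) : ℝ :=
  Γ.lam i * (Γ.G (c i) * Γ.p i x Cls.q + (1 - Γ.G (c i)) * Γ.p i x Cls.u)

/-- The true conditional probability (calibrated belief) `f_RE` given `c̄`. -/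
def fRE (c : GrpI → ℝ) (i : GrpI) (x : (j : Fin N) → Xs j) : ℝ :=
  Γ.G (c i) * Γ.p i x Cls.q /
    (Γ.G (c i) * Γ.p i x Cls.q + (1 - Γ.G (c i)) * Γ.p i x Cls.u)

/-- Utility `U_i(c̄(i), d(i))` of the representative `i`-applicant. -/
def Uapp (i : GrpI) (ci : ℝ) (di : ((j : Fin N) → Xs j) → ℝ) : ℝ :=
  Γ.om * ∑ x, (Γ.G ci * Γ.p i x Cls.q + (1 - Γ.G ci) * Γ.p i x Cls.u) * di x -
    ∫ t in Set.Iic ci, t * Γ.g t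

/-- Firm utility `U_F(d, μ, f)`. -/
def UF (d μ f : GrpI → ((j : Fin N) → Xs j) → ℝ) : ℝ :=
  ∑ i, ∑ x, d i x * μ i x * (f i x * Γ.vq - (1 - f i x) * Γ.vu)

/-- The color-blind true distribution of features `μ_cb,RE`. -/
def mucbRE (c : GrpI → ℝ) (x : (j : Fin N) → Xs j) : ℝ :=
  Γ.muRE c GrpI.w x + Γ.muRE c GrpI.b x

/-- The color-blind true conditional probability `f_cb,RE`. -/
def fcbRE (c : GrpI → ℝ) (x : (j : Fin N) → Xs j) : ℝ :=
  (Γ.muRE c GrpI.w x * Γ.fRE c GrpI.w x + Γ.muRE c GrpI.b x * Γ.fRE c GrpI.b x) /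
    Γ.mucbRE c x

/-- Firm utility when data is color-blind. -/
def UFcb (dcb μcb fcb : ((j : Fin N) → Xs j) → ℝ) : ℝ :=
  ∑ x, dcb x * μcb x * (fcb x * Γ.vq - (1 - fcb x) * Γ.vu)

/-- `d(i | l_m)`: conditional acceptance probability at likelihood value `lv`. -/
def dcond (i : GrpI) (di : ((j : Fin N) → Xs j) → ℝ) (lv : ℝ) : ℝ :=
  (∑ x ∈ Finset.univ.filter (fun x => Γ.lhd x = lv), Γ.p i x Cls.q * di x) /
    ∑ x ∈ Finset.univ.filter (fun x => Γ.lhd x = lv), Γ.p i x Cls.q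

/-- The within-group policy `d(i)` is associated with the likelihood mixture `ℓ`. -/
def AssociatedWith (i : GrpI) (di : ((j : Fin N) → Xs j) → ℝ) (ℓ : ℝ) : Prop :=
  0 ≤ ℓ ∧ ℓ ≤ Γ.lmax ∧
    ∀ lv ∈ Γ.LVset,
      (Γ.lceil ℓ < lv → Γ.dcond i di lv = 1) ∧
      (lv = Γ.lceil ℓ →
        Γ.dcond i di lv = (Γ.lceil ℓ - ℓ) / (Γ.lceil ℓ - Γ.lceilm ℓ)) ∧
      (lv < Γ.lceil ℓ → Γ.dcond i di lv = 0)

/-- A decision policy is fair if both within-group policies are associated with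
the same likelihood mixture. -/
def Fair (d : GrpI → ((j : Fin N) → Xs j) → ℝ) : Prop :=
  ∃ ℓ, Γ.AssociatedWith GrpI.w (d GrpI.w) ℓ ∧ Γ.AssociatedWith GrpI.b (d GrpI.b) ℓ

/-- `WW(l_m) = ω ∑_{x_𝒴 : l(x_𝒴) > l_m} (p(x_𝒴|q) - p(x_𝒴|u))`. -/
def WWval (t : ℝ) : ℝ :=
  Γ.om * ∑ xY ∈ Finset.univ.filter (fun xY => t < Γ.lhdY xY),
    (Γ.pY xY Cls.q - Γ.pY xY Cls.u)

/-- The piecewise-linear function `WW` interpolating the points `(l_m, WW(l_m))`. -/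
def WW (ℓ : ℝ) : ℝ :=
  if Γ.lceil ℓ = Γ.lceilm ℓ then Γ.WWval (Γ.lceil ℓ)
  else
    (Γ.WWval (Γ.lceilm ℓ) * (Γ.lceil ℓ - ℓ) +
        Γ.WWval (Γ.lceil ℓ) * (ℓ - Γ.lceilm ℓ)) /
      (Γ.lceil ℓ - Γ.lceilm ℓ)

/-- `EĒ(l_m)`: the unique cost with `G(EĒ(l_m)) = 1 / ((v_q/v_u) l_m + 1)`. -/
def EEbar (lv : ℝ) : ℝ := sInf {cc | 1 / (Γ.vq / Γ.vu * lv + 1) ≤ Γ.G cc}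

/-- The correspondence `EE : [0, l_n] ⇒ ℝ`. -/
def EE (ℓ : ℝ) : Set ℝ :=
  if ℓ = 0 then Set.Ici (Γ.EEbar (Γ.lceil 0))
  else if ℓ = Γ.lmax then Set.Iic (Γ.EEbar Γ.lmax)
  else if ℓ ∈ Γ.LVset then Set.Icc (Γ.EEbar (Γ.lnext ℓ)) (Γ.EEbar ℓ)
  else {Γ.EEbar (Γ.lceil ℓ)}

/-- Each representative applicant's cost threshold is a best response to `d`. -/
def BestResponds (c : GrpI → ℝ) (d : GrpI → ((j : Fin N) → Xs j) → ℝ) : Prop :=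
  ∀ (i : GrpI) (c' : ℝ), Γ.Uapp i c' (d i) ≤ Γ.Uapp i (c i) (d i)

/-- An (un-controlled) equilibrium. -/
def IsEquilibrium (c : GrpI → ℝ) (d : GrpI → ((j : Fin N) → Xs j) → ℝ) : Prop :=
  IsPolicy d ∧ Γ.BestResponds c d ∧
    ∀ d', IsPolicy d' →
      Γ.UF d' (Γ.muRE c) (Γ.fRE c) ≤ Γ.UF d (Γ.muRE c) (Γ.fRE c)

/-- A `k`-controlled equilibrium, for the control `(μ, f) ↦ K μ f`. -/
def IsControlledEq
    (K : (GrpI → ((j : Fin N) → Xs j) → ℝ) → (GrpI → ((j : Fin N) → Xs j) → ℝ) →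
      Set (GrpI → ((j : Fin N) → Xs j) → ℝ))
    (c : GrpI → ℝ) (d : GrpI → ((j : Fin N) → Xs j) → ℝ) : Prop :=
  d ∈ K (Γ.muRE c) (Γ.fRE c) ∧ Γ.BestResponds c d ∧
    ∀ d' ∈ K (Γ.muRE c) (Γ.fRE c),
      Γ.UF d' (Γ.muRE c) (Γ.fRE c) ≤ Γ.UF d (Γ.muRE c) (Γ.fRE c)

/-- `𝒮_k(μ, f)`: firm-optimal policies under the control `K` at `(μ, f)`. -/
def Smax
    (K : (GrpI → ((j : Fin N) → Xs j) → ℝ) → (GrpI → ((j : Fin N) → Xs j) → ℝ) →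
      Set (GrpI → ((j : Fin N) → Xs j) → ℝ))
    (μ f : GrpI → ((j : Fin N) → Xs j) → ℝ) :
    Set (GrpI → ((j : Fin N) → Xs j) → ℝ) :=
  {d | d ∈ K μ f ∧ ∀ d' ∈ K μ f, Γ.UF d' μ f ≤ Γ.UF d μ f}

/-- A `k`-controlled `ε`-equilibrium. -/
def IsCtrlEpsEq
    (K : (GrpI → ((j : Fin N) → Xs j) → ℝ) → (GrpI → ((j : Fin N) → Xs j) → ℝ) →
      Set (GrpI → ((j : Fin N) → Xs j) → ℝ))
    (ε : ℝ) (c : GrpI → ℝ) (d : GrpI → ((j : Fin N) → Xs j) → ℝ) : Prop :=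
  ∃ μ f, FullSupp μ ∧ OpenBelief f ∧
    pairDist μ f (Γ.muRE c) (Γ.fRE c) ≤ ε ∧
    Γ.BestResponds c d ∧ d ∈ K μ f ∧ ∀ d' ∈ K μ f, Γ.UF d' μ f ≤ Γ.UF d μ f

/-- Best responses of applicants to a color-blind policy. -/
def BestRespondsCb (c : GrpI → ℝ) (dcb : ((j : Fin N) → Xs j) → ℝ) : Prop :=
  ∀ (i : GrpI) (c' : ℝ), Γ.Uapp i c' dcb ≤ Γ.Uapp i (c i) dcb

/-- An equilibrium when data is color-blind (unrestricted control). -/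
def IsCbEquilibrium (c : GrpI → ℝ) (dcb : ((j : Fin N) → Xs j) → ℝ) : Prop :=
  IsCbPolicy dcb ∧ Γ.BestRespondsCb c dcb ∧
    ∀ dcb', IsCbPolicy dcb' →
      Γ.UFcb dcb' (Γ.mucbRE c) (Γ.fcbRE c) ≤ Γ.UFcb dcb (Γ.mucbRE c) (Γ.fcbRE c)

/-- A `k_cb`-controlled equilibrium when data is color-blind. -/
def IsCbControlledEq (K : Set (((j : Fin N) → Xs j) → ℝ)) (c : GrpI → ℝ)
    (dcb : ((j : Fin N) → Xs j) → ℝ) : Prop :=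
  dcb ∈ K ∧ Γ.BestRespondsCb c dcb ∧
    ∀ dcb' ∈ K,
      Γ.UFcb dcb' (Γ.mucbRE c) (Γ.fcbRE c) ≤ Γ.UFcb dcb (Γ.mucbRE c) (Γ.fcbRE c)

end Game

/-- A control when data is color-blind: for each `X` and each
`(μ_cb, f_cb) ∈ Δ°(X) × (0,1)^X` it specifies a nonempty compact set of
color-blind decision policies. -/
structure CbControl : Type 1 where
  sets : ∀ (N : ℕ) (Xs : Fin N → Type) [∀ j, Fintype (Xs j)] [∀ j, Nonempty (Xs j)],
    (((j : Fin N) → Xs j) → ℝ) → (((j : Fin N) → Xs j) → ℝ) →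
      Set (((j : Fin N) → Xs j) → ℝ)
  nonempty : ∀ (N : ℕ) (Xs : Fin N → Type) [∀ j, Fintype (Xs j)]
    [∀ j, Nonempty (Xs j)] (μ f : ((j : Fin N) → Xs j) → ℝ),
    (∀ x, 0 < μ x) → (∑ x, μ x = 1) → (∀ x, f x ∈ Set.Ioo (0 : ℝ) 1) →
    (sets N Xs μ f).Nonempty
  compact : ∀ (N : ℕ) (Xs : Fin N → Type) [∀ j, Fintype (Xs j)]
    [∀ j, Nonempty (Xs j)] (μ f : ((j : Fin N) → Xs j) → ℝ),
    (∀ x, 0 < μ x) → (∑ x, μ x = 1) → (∀ x, f x ∈ Set.Ioo (0 : ℝ) 1) →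
    IsCompact (sets N Xs μ f)
  mem_policy : ∀ (N : ℕ) (Xs : Fin N → Type) [∀ j, Fintype (Xs j)]
    [∀ j, Nonempty (Xs j)] (μ f : ((j : Fin N) → Xs j) → ℝ),
    (∀ x, 0 < μ x) → (∑ x, μ x = 1) → (∀ x, f x ∈ Set.Ioo (0 : ℝ) 1) →
    sets N Xs μ f ⊆ {dcb | IsCbPolicy dcb}

/-!
An optimal policy under equal opportunity is, within each group, a threshold rule in the
likelihood `l`. Otherwise, shift acceptances from a likelihood class `v` to a class `v' > v`
keeping the accepted mass of qualified applicants, hence the true positive rate, fixed: each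
unit of qualified mass carries `1/v` units of unqualified mass in class `v` but only `1/v'` in
class `v'`, so the firm's utility strictly rises. The true positive rate of group `i` is
`∑_v w(v) d(i|v)` with weights `w(v)` that do not depend on `i`, and two threshold rules with
the same weighted sum coincide. A threshold rule with pivot `a` and value `t` at `a` is
associated with the mixture `a - t (a - a⁻)`. Conversely, policies associated with the same
mixture agree on every likelihood class, so they have the same true positive rates.
-/

section ThresholdRule

variable {α : Type*} [LinearOrder α] {s : Finset α} {e e' w : α → ℝ}

def IsThresholdOn (s : Finset α) (e : α → ℝ) : Prop :=
  (∀ a ∈ s, e a ∈ Set.Icc (0 : ℝ) 1) ∧ ∀ a ∈ s, ∀ b ∈ s, a < b → 0 < e a → e b = 1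

namespace IsThresholdOn

lemma eq_zero_of_lt (he : IsThresholdOn s e) {a b : α} (ha : a ∈ s) (hb : b ∈ s)
    (hab : a < b) (hb1 : e b < 1) : e a = 0 := by
  by_contra h
  have := he.2 a ha b hb hab (lt_of_le_of_ne (he.1 a ha).1 (Ne.symm h))
  linarith

lemma sum_mul_lt (he' : IsThresholdOn s e') (he : ∀ a ∈ s, e a ∈ Set.Icc (0 : ℝ) 1)
    (hw : ∀ a ∈ s, 0 < w a) {a : α} (ha : a ∈ s) (hlt : e' a < e a)
    (habove : ∀ b ∈ s, a < b → e' b = e b) :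
    ∑ b ∈ s, w b * e' b < ∑ b ∈ s, w b * e b := by
  refine Finset.sum_lt_sum (fun b hb => ?_) ⟨a, ha, mul_lt_mul_of_pos_left hlt (hw a ha)⟩
  rcases lt_trichotomy b a with hba | rfl | hab
  · rw [he'.eq_zero_of_lt hb ha hba (hlt.trans_le (he a ha).2), mul_zero]
    exact mul_nonneg (hw b hb).le (he b hb).1
  · exact mul_le_mul_of_nonneg_left hlt.le (hw b hb).le
  · rw [habove b hb hab]

lemma eqOn_of_sum_mul_eq (he : IsThresholdOn s e) (he' : IsThresholdOn s e')
    (hw : ∀ a ∈ s, 0 < w a) (hsum : ∑ a ∈ s, w a * e a = ∑ a ∈ s, w a * e' a) :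
    Set.EqOn e e' s := by
  by_contra hne
  simp only [Set.EqOn, Finset.mem_coe, not_forall] at hne
  obtain ⟨a₀, ha₀, hne₀⟩ := hne
  -- Compare the two weighted sums at the largest point where `e` and `e'` differ.
  obtain ⟨a, ha, hmax⟩ := (s.filter fun a => e a ≠ e' a).exists_max_image id
    ⟨a₀, Finset.mem_filter.2 ⟨ha₀, hne₀⟩⟩
  rw [Finset.mem_filter] at ha
  have habove : ∀ b ∈ s, a < b → e b = e' b := fun b hb hab => by
    by_contra h
    exact (hmax b (Finset.mem_filter.2 ⟨hb, h⟩)).not_gt hab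
  rcases lt_or_gt_of_ne ha.2 with hlt | hlt
  · exact (he.sum_mul_lt he'.1 hw ha.1 hlt habove).ne hsum
  · exact (he'.sum_mul_lt he.1 hw ha.1 hlt fun b hb hab => (habove b hb hab).symm).ne' hsum

lemma exists_pivot (he : IsThresholdOn s e) (hs : s.Nonempty) :
    ∃ a ∈ s, (∀ b ∈ s, a < b → e b = 1) ∧ (∀ b ∈ s, b < a → e b = 0) ∧
      (e a < 1 ∨ ∀ b ∈ s, a ≤ b) := by
  by_cases hlt : ∃ a ∈ s, e a < 1
  · obtain ⟨a₀, ha₀, hlt₀⟩ := hlt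
    obtain ⟨a, ha, hmax⟩ := (s.filter fun a => e a < 1).exists_max_image id
      ⟨a₀, Finset.mem_filter.2 ⟨ha₀, hlt₀⟩⟩
    rw [Finset.mem_filter] at ha
    refine ⟨a, ha.1, fun b hb hab => ?_, fun b hb hba => he.eq_zero_of_lt hb ha.1 hba ha.2,
      Or.inl ha.2⟩
    by_contra h
    exact (hmax b (Finset.mem_filter.2 ⟨hb, lt_of_le_of_ne (he.1 b hb).2 h⟩)).not_gt hab
  · push Not at hlt
    obtain ⟨a, ha, hmin⟩ := s.exists_min_image id hs
    exact ⟨a, ha, fun b hb _ => le_antisymm (he.1 b hb).2 (hlt b hb),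
      fun b hb hba => absurd (hmin b hb) (not_le.2 hba), Or.inr hmin⟩

end IsThresholdOn

end ThresholdRule

lemma exists_sum_mul_eq_and_sum_mul_lt {X : Type*} [Fintype X] (q u d : X → ℝ)
    {S T : Finset X} (hST : Disjoint S T) {r r' : ℝ} (hr : 0 < r) (hrr' : r < r')
    (hS : ∀ x ∈ S, q x = r * u x) (hT : ∀ x ∈ T, q x = r' * u x)
    (hd : ∀ x, d x ∈ Set.Icc (0 : ℝ) 1) (hA : 0 < ∑ x ∈ S, q x * d x)
    (hB : 0 < ∑ x ∈ T, q x * (1 - d x)) :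
    ∃ d' : X → ℝ, (∀ x, d' x ∈ Set.Icc (0 : ℝ) 1) ∧
      ∑ x, q x * d' x = ∑ x, q x * d x ∧ ∑ x, u x * d' x < ∑ x, u x * d x := by
  set A := ∑ x ∈ S, q x * d x
  set B := ∑ x ∈ T, q x * (1 - d x)
  -- Remove the fraction `t` of acceptances on `S` and add the fraction `s` of the
  -- rejections on `T`; `t * A = s * B` keeps the `q`-mass fixed.
  set t := B / (A + B)
  set s := A / (A + B)
  have hts : t * A = s * B := by ring
  have ht1 : t ≤ 1 := (div_le_one (by positivity)).2 (by linarith)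
  have hs1 : s ≤ 1 := (div_le_one (by positivity)).2 (by linarith)
  let d' : X → ℝ := fun x =>
    d x - (if x ∈ S then t * d x else 0) + (if x ∈ T then s * (1 - d x) else 0)
  have hsum : ∀ f : X → ℝ, ∑ x, f x * d' x = ∑ x, f x * d x
      - t * ∑ x ∈ S, f x * d x + s * ∑ x ∈ T, f x * (1 - d x) := by
    intro f
    rw [Finset.mul_sum, Finset.mul_sum, ← Finset.univ_inter S, ← Finset.univ_inter T,
      ← Finset.sum_ite_mem, ← Finset.sum_ite_mem, ← Finset.sum_sub_distrib,
      ← Finset.sum_add_distrib]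
    refine Finset.sum_congr rfl fun x _ => ?_
    simp only [d']
    split_ifs <;> ring
  have huS : ∑ x ∈ S, u x * d x = A / r := by
    rw [eq_div_iff hr.ne', Finset.sum_mul]
    exact Finset.sum_congr rfl fun x hx => by rw [hS x hx]; ring
  have huT : ∑ x ∈ T, u x * (1 - d x) = B / r' := by
    rw [eq_div_iff (hr.trans hrr').ne', Finset.sum_mul]
    exact Finset.sum_congr rfl fun x hx => by rw [hT x hx]; ring
  refine ⟨d', fun x => ?_, ?_, ?_⟩
  · obtain ⟨hd0, hd1⟩ := hd x
    by_cases hxS : x ∈ S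
    · have hxT : x ∉ T := Finset.disjoint_left.1 hST hxS
      simp only [d', hxS, hxT, if_true, if_false]
      constructor <;> nlinarith [show 0 ≤ t by positivity]
    · by_cases hxT : x ∈ T
      · simp only [d', hxS, hxT, if_true, if_false]
        constructor <;> nlinarith [show 0 ≤ s by positivity]
      · simp only [d', hxS, hxT, if_false]
        constructor <;> linarith
  · rw [hsum, hts]; ring
  · rw [hsum, huS, huT]
    have hgain : t * (A / r) - s * (B / r') = t * A * (1 / r - 1 / r') := by
      rw [show s * (B / r') = t * A / r' by rw [hts]; ring]; ring
    have hm : 0 < t * A := by positivity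
    have hr' : 1 / r' < 1 / r := one_div_lt_one_div_of_lt hr hrr'
    linarith [mul_pos hm (sub_pos.2 hr')]

namespace Game

variable {N : ℕ} {Xs : Fin N → Type} [∀ j, Fintype (Xs j)] [∀ j, Nonempty (Xs j)]
  (Γ : Game N Xs)

lemma lam_pos (i : GrpI) : 0 < Γ.lam i := by
  cases i
  · exact Γ.lamw_pos
  · exact sub_pos.2 Γ.lamw_lt_one

lemma setIntegral_g_pos {s : Set ℝ} (hs : 0 < volume s) : 0 < ∫ t in s, Γ.g t := by
  rw [setIntegral_pos_iff_support_of_nonneg_ae (ae_of_all _ fun t => (Γ.g_pos t).le)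
    Γ.g_int.integrableOn, Function.support_eq_univ fun t => (Γ.g_pos t).ne',
    Set.univ_inter]
  exact hs

lemma G_pos (t : ℝ) : 0 < Γ.G t :=
  Γ.setIntegral_g_pos (by simp [Real.volume_Iic])

lemma G_lt_one (t : ℝ) : Γ.G t < 1 := by
  have hsplit := integral_add_compl (measurableSet_Iic (a := t)) Γ.g_int
  have hIoi : 0 < ∫ s in (Set.Iic t)ᶜ, Γ.g s :=
    Γ.setIntegral_g_pos (by simp [Set.compl_Iic, Real.volume_Ioi])
  rw [Γ.g_norm] at hsplit
  exact (lt_add_of_pos_right _ hIoi).trans_eq hsplit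

lemma p_pos (i : GrpI) (x : (j : Fin N) → Xs j) (y : Cls) : 0 < Γ.p i x y :=
  mul_pos (Γ.pY_pos _ _) (Γ.pC_pos _ _)

lemma lhd_pos (x : (j : Fin N) → Xs j) : 0 < Γ.lhd x :=
  div_pos (Γ.pY_pos _ _) (Γ.pY_pos _ _)

lemma pos_of_mem_LVset {v : ℝ} (hv : v ∈ Γ.LVset) : 0 < v := by
  obtain ⟨x, rfl⟩ := hv
  exact Γ.lhd_pos x

lemma p_q_eq_lhd_mul_p_u (i : GrpI) (x : (j : Fin N) → Xs j) :
    Γ.p i x Cls.q = Γ.lhd x * Γ.p i x Cls.u := by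
  rw [Game.p, Game.p, Game.lhd, ← mul_assoc, div_mul_cancel₀ _ (Γ.pY_pos _ _).ne']

lemma sum_mul_pC (i : GrpI) (φ : ((j : Γ.Ysub) → Xs j.1) → ℝ) :
    ∑ x, φ (Γ.proj x) * Γ.pC i x = ∑ xY, φ xY := by
  rw [← Finset.sum_fiberwise Finset.univ Γ.proj]
  refine Finset.sum_congr rfl fun xY _ => ?_
  rw [Finset.sum_congr rfl fun x hx => by rw [(Finset.mem_filter.1 hx).2], ← Finset.mul_sum,
    show ∑ x ∈ Finset.univ.filter (fun x => Γ.proj x = xY), Γ.pC i x = 1 from Γ.pC_sum i xY,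
    mul_one]

lemma sum_p (i : GrpI) (y : Cls) : ∑ x, Γ.p i x y = 1 :=
  (Γ.sum_mul_pC i fun xY => Γ.pY xY y).trans (Γ.pY_sum y)

def lhdValues : Finset ℝ := Finset.univ.image Γ.lhd

lemma mem_lhdValues {v : ℝ} : v ∈ Γ.lhdValues ↔ v ∈ Γ.LVset := by
  simp [lhdValues, LVset]

lemma lhdValues_nonempty : Γ.lhdValues.Nonempty :=
  Finset.univ_nonempty.image _

/-- `∑_{x : l(x) = v} p(x | i, q)` for either group `i` (`sum_filter_lhd_p_q`). -/
def lhdWeight (v : ℝ) : ℝ :=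
  ∑ xY ∈ Finset.univ.filter (fun xY => Γ.lhdY xY = v), Γ.pY xY Cls.q

lemma sum_filter_lhd_p_q (i : GrpI) (v : ℝ) :
    ∑ x ∈ Finset.univ.filter (fun x => Γ.lhd x = v), Γ.p i x Cls.q = Γ.lhdWeight v := by
  rw [Finset.sum_filter, lhdWeight, Finset.sum_filter,
    ← Γ.sum_mul_pC i fun xY => if Γ.lhdY xY = v then Γ.pY xY Cls.q else 0]
  refine Finset.sum_congr rfl fun x _ => ?_
  rw [ite_mul, zero_mul]
  rfl

lemma lhdWeight_pos {v : ℝ} (hv : v ∈ Γ.LVset) : 0 < Γ.lhdWeight v := by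
  obtain ⟨x, rfl⟩ := hv
  exact Finset.sum_pos (fun xY _ => Γ.pY_pos _ _)
    ⟨Γ.proj x, Finset.mem_filter.2 ⟨Finset.mem_univ _, rfl⟩⟩

lemma dcond_eq (i : GrpI) (di : ((j : Fin N) → Xs j) → ℝ) (v : ℝ) :
    Γ.dcond i di v =
      (∑ x ∈ Finset.univ.filter (fun x => Γ.lhd x = v), Γ.p i x Cls.q * di x) /
        Γ.lhdWeight v := by
  rw [dcond, Γ.sum_filter_lhd_p_q]

lemma dcond_mem_Icc {i : GrpI} {di : ((j : Fin N) → Xs j) → ℝ}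
    (hdi : ∀ x, di x ∈ Set.Icc (0 : ℝ) 1) {v : ℝ} (hv : v ∈ Γ.LVset) :
    Γ.dcond i di v ∈ Set.Icc (0 : ℝ) 1 := by
  have hw := Γ.lhdWeight_pos hv
  rw [dcond_eq, Set.mem_Icc, div_le_one hw]
  refine ⟨div_nonneg (Finset.sum_nonneg fun x _ => mul_nonneg (Γ.p_pos _ _ _).le (hdi x).1)
    hw.le, ?_⟩
  rw [← Γ.sum_filter_lhd_p_q i]
  exact Finset.sum_le_sum fun x _ => mul_le_of_le_one_right (Γ.p_pos _ _ _).le (hdi x).2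

lemma sum_p_q_mul_eq_sum_lhdWeight_mul_dcond (i : GrpI) (di : ((j : Fin N) → Xs j) → ℝ) :
    ∑ x, Γ.p i x Cls.q * di x = ∑ v ∈ Γ.lhdValues, Γ.lhdWeight v * Γ.dcond i di v := by
  rw [← Finset.sum_fiberwise_of_maps_to fun x _ => Finset.mem_image_of_mem Γ.lhd
    (Finset.mem_univ x)]
  refine Finset.sum_congr rfl fun v hv => ?_
  rw [dcond_eq, mul_div_cancel₀ _ (Γ.lhdWeight_pos (Γ.mem_lhdValues.1 hv)).ne']

lemma G_mul_p_add_pos (t : ℝ) (i : GrpI) (x : (j : Fin N) → Xs j) :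
    0 < Γ.G t * Γ.p i x Cls.q + (1 - Γ.G t) * Γ.p i x Cls.u :=
  add_pos (mul_pos (Γ.G_pos t) (Γ.p_pos i x _))
    (mul_pos (sub_pos.2 (Γ.G_lt_one t)) (Γ.p_pos i x _))

lemma muRE_mul_fRE (c : GrpI → ℝ) (i : GrpI) (x : (j : Fin N) → Xs j) :
    Γ.muRE c i x * Γ.fRE c i x = Γ.lam i * Γ.G (c i) * Γ.p i x Cls.q := by
  have hD := (Γ.G_mul_p_add_pos (c i) i x).ne'
  rw [muRE, fRE]
  field_simp

lemma TP_muRE_fRE (c : GrpI → ℝ) (d : GrpI → ((j : Fin N) → Xs j) → ℝ) (i : GrpI) :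
    TP i d (Γ.muRE c) (Γ.fRE c) = ∑ x, Γ.p i x Cls.q * d i x := by
  have hK : Γ.lam i * Γ.G (c i) ≠ 0 := (mul_pos (Γ.lam_pos i) (Γ.G_pos _)).ne'
  have hnum : ∀ x, d i x * Γ.muRE c i x * Γ.fRE c i x =
      Γ.lam i * Γ.G (c i) * (Γ.p i x Cls.q * d i x) := fun x => by
    rw [mul_assoc, Γ.muRE_mul_fRE]; ring
  rw [TP, Finset.sum_congr rfl fun x _ => hnum x,
    Finset.sum_congr rfl fun x _ => Γ.muRE_mul_fRE c i x, ← Finset.mul_sum, ← Finset.mul_sum,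
    Γ.sum_p, mul_one, mul_div_cancel_left₀ _ hK]

lemma UF_muRE_fRE (c : GrpI → ℝ) (d : GrpI → ((j : Fin N) → Xs j) → ℝ) :
    Γ.UF d (Γ.muRE c) (Γ.fRE c) = ∑ i, Γ.lam i *
      (Γ.G (c i) * Γ.vq * ∑ x, Γ.p i x Cls.q * d i x -
        (1 - Γ.G (c i)) * Γ.vu * ∑ x, Γ.p i x Cls.u * d i x) := by
  refine Finset.sum_congr rfl fun i _ => ?_
  rw [Finset.mul_sum, Finset.mul_sum, ← Finset.sum_sub_distrib, Finset.mul_sum]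
  refine Finset.sum_congr rfl fun x _ => ?_
  have hD := (Γ.G_mul_p_add_pos (c i) i x).ne'
  rw [muRE, fRE]
  field_simp
  ring

lemma UF_muRE_fRE_lt_update {c : GrpI → ℝ} {d : GrpI → ((j : Fin N) → Xs j) → ℝ} {i : GrpI}
    {di' : ((j : Fin N) → Xs j) → ℝ}
    (hq : ∑ x, Γ.p i x Cls.q * di' x = ∑ x, Γ.p i x Cls.q * d i x)
    (hu : ∑ x, Γ.p i x Cls.u * di' x < ∑ x, Γ.p i x Cls.u * d i x) :
    Γ.UF d (Γ.muRE c) (Γ.fRE c) < Γ.UF (Function.update d i di') (Γ.muRE c) (Γ.fRE c) := by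
  have hK : 0 < Γ.lam i * ((1 - Γ.G (c i)) * Γ.vu) :=
    mul_pos (Γ.lam_pos i) (mul_pos (sub_pos.2 (Γ.G_lt_one _)) Γ.vu_pos)
  rw [UF_muRE_fRE, UF_muRE_fRE]
  refine Finset.sum_lt_sum (fun i' _ => ?_) ⟨i, Finset.mem_univ _, ?_⟩
  · rcases eq_or_ne i' i with rfl | h
    · simp only [Function.update_self, hq]
      nlinarith
    · simp only [Function.update_of_ne h, le_refl]
  · simp only [Function.update_self, hq]
    nlinarith

lemma update_mem_EOset {c : GrpI → ℝ} {d : GrpI → ((j : Fin N) → Xs j) → ℝ} {i : GrpI}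
    {di' : ((j : Fin N) → Xs j) → ℝ} (hd : d ∈ EOset (Γ.muRE c) (Γ.fRE c))
    (hdi' : ∀ x, di' x ∈ Set.Icc (0 : ℝ) 1)
    (hq : ∑ x, Γ.p i x Cls.q * di' x = ∑ x, Γ.p i x Cls.q * d i x) :
    Function.update d i di' ∈ EOset (Γ.muRE c) (Γ.fRE c) := by
  have hq' : ∀ i', ∑ x, Γ.p i' x Cls.q * Function.update d i di' i' x =
      ∑ x, Γ.p i' x Cls.q * d i' x := by
    intro i'
    rcases eq_or_ne i' i with rfl | h
    · simpa only [Function.update_self] using hq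
    · simp only [Function.update_of_ne h]
  refine ⟨fun i' x => ?_, ?_⟩
  · rcases eq_or_ne i' i with rfl | h
    · simpa only [Function.update_self] using hdi' x
    · simpa only [Function.update_of_ne h] using hd.1 i' x
  · rw [TP_muRE_fRE, TP_muRE_fRE, hq', hq', ← TP_muRE_fRE, ← TP_muRE_fRE]
    exact hd.2

lemma isThresholdOn_dcond_of_mem_Smax {c : GrpI → ℝ} {d : GrpI → ((j : Fin N) → Xs j) → ℝ}
    (hd : d ∈ Γ.Smax (fun μ f => EOset μ f) (Γ.muRE c) (Γ.fRE c)) (i : GrpI) :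
    IsThresholdOn Γ.lhdValues (Γ.dcond i (d i)) := by
  have hdp : IsPolicy d := hd.1.1
  refine ⟨fun v hv => Γ.dcond_mem_Icc (hdp i) (Γ.mem_lhdValues.1 hv),
    fun v hv v' hv' hvv' hpos => ?_⟩
  by_contra hne
  have hlt1 : Γ.dcond i (d i) v' < 1 :=
    lt_of_le_of_ne (Γ.dcond_mem_Icc (hdp i) (Γ.mem_lhdValues.1 hv')).2 hne
  rw [dcond_eq, div_pos_iff_of_pos_right (Γ.lhdWeight_pos (Γ.mem_lhdValues.1 hv))] at hpos
  rw [dcond_eq, div_lt_one (Γ.lhdWeight_pos (Γ.mem_lhdValues.1 hv')),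
    ← Γ.sum_filter_lhd_p_q i, ← sub_pos, ← Finset.sum_sub_distrib] at hlt1
  -- Move acceptances from the likelihood class `v` to the likelihood class `v' > v`.
  obtain ⟨di', hdi', hq, hu⟩ := exists_sum_mul_eq_and_sum_mul_lt
    (fun x => Γ.p i x Cls.q) (fun x => Γ.p i x Cls.u) (d i)
    (S := Finset.univ.filter fun x => Γ.lhd x = v)
    (T := Finset.univ.filter fun x => Γ.lhd x = v')
    (Finset.disjoint_filter.2 fun x _ h h' => hvv'.ne (h.symm.trans h'))
    (Γ.pos_of_mem_LVset (Γ.mem_lhdValues.1 hv)) hvv'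
    (fun x hx => (Finset.mem_filter.1 hx).2 ▸ Γ.p_q_eq_lhd_mul_p_u i x)
    (fun x hx => (Finset.mem_filter.1 hx).2 ▸ Γ.p_q_eq_lhd_mul_p_u i x)
    (hdp i) hpos (by simpa only [mul_sub, mul_one] using hlt1)
  exact (hd.2 _ (Γ.update_mem_EOset hd.1 hdi' hq)).not_gt (Γ.UF_muRE_fRE_lt_update hq hu)

def lpred (a : ℝ) : ℝ := sSup (insert 0 {v | v ∈ Γ.LVset ∧ v < a})

lemma lceilm_eq_lpred_lceil (ℓ : ℝ) : Γ.lceilm ℓ = Γ.lpred (Γ.lceil ℓ) := rfl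

lemma finite_insert_zero_LVset_lt (a : ℝ) : (insert 0 {v | v ∈ Γ.LVset ∧ v < a}).Finite :=
  ((Set.finite_range Γ.lhd).subset fun _ hv => hv.1).insert 0

lemma lpred_nonneg (a : ℝ) : 0 ≤ Γ.lpred a :=
  le_csSup (Γ.finite_insert_zero_LVset_lt a).bddAbove (Set.mem_insert _ _)

lemma le_lpred {a v : ℝ} (hv : v ∈ Γ.LVset) (hva : v < a) : v ≤ Γ.lpred a :=
  le_csSup (Γ.finite_insert_zero_LVset_lt a).bddAbove (Set.mem_insert_of_mem _ ⟨hv, hva⟩)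

lemma lpred_lt {a : ℝ} (ha : 0 < a) : Γ.lpred a < a := by
  rcases (Set.insert_nonempty _ _).csSup_mem (Γ.finite_insert_zero_LVset_lt a) with h | h
  · rw [show Γ.lpred a = 0 from h]
    exact ha
  · exact h.2

lemma lpred_eq_zero {a : ℝ} (ha : ∀ v ∈ Γ.LVset, a ≤ v) : Γ.lpred a = 0 := by
  have hempty : {v | v ∈ Γ.LVset ∧ v < a} = ∅ :=
    Set.eq_empty_of_forall_notMem fun v hv => (ha v hv.1).not_gt hv.2
  rw [lpred, hempty, LawfulSingleton.insert_empty_eq, csSup_singleton]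

lemma lceil_eq {a ℓ : ℝ} (ha : a ∈ Γ.LVset) (hℓa : ℓ ≤ a)
    (hbelow : ∀ v ∈ Γ.LVset, v < a → v < ℓ) : Γ.lceil ℓ = a := by
  have hfin : {v | v ∈ Γ.LVset ∧ ℓ ≤ v}.Finite :=
    (Set.finite_range Γ.lhd).subset fun _ hv => hv.1
  refine le_antisymm (csInf_le hfin.bddBelow ⟨ha, hℓa⟩) (le_csInf ⟨a, ha, hℓa⟩ ?_)
  rintro v ⟨hv, hℓv⟩
  by_contra! hva
  exact (hbelow v hv hva).not_ge hℓv

lemma associatedWith_of_pivot {i : GrpI} {di : ((j : Fin N) → Xs j) → ℝ} {a : ℝ}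
    (ha : a ∈ Γ.LVset) (habove : ∀ v ∈ Γ.LVset, a < v → Γ.dcond i di v = 1)
    (hbelow : ∀ v ∈ Γ.LVset, v < a → Γ.dcond i di v = 0)
    (hmem : Γ.dcond i di a ∈ Set.Icc (0 : ℝ) 1)
    (hpivot : Γ.dcond i di a < 1 ∨ ∀ v ∈ Γ.LVset, a ≤ v) :
    Γ.AssociatedWith i di (a - Γ.dcond i di a * (a - Γ.lpred a)) := by
  set t := Γ.dcond i di a
  set b := Γ.lpred a
  set ℓ := a - t * (a - b)
  have hba : 0 < a - b := sub_pos.2 (Γ.lpred_lt (Γ.pos_of_mem_LVset ha))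
  have hbℓ : b ≤ ℓ := by nlinarith [hmem.2]
  have hℓa : ℓ ≤ a := by nlinarith [hmem.1]
  -- `hpivot` excludes `t = 1` with a likelihood value below `a`: then `ℓ = a⁻` and `⌈ℓ⌉ = a⁻`.
  have hceil : Γ.lceil ℓ = a := by
    refine Γ.lceil_eq ha hℓa fun v hv hva => ?_
    rcases hpivot with ht | hmin
    · exact (Γ.le_lpred hv hva).trans_lt (by nlinarith)
    · exact absurd (hmin v hv) (not_le.2 hva)
  refine ⟨(Γ.lpred_nonneg a).trans hbℓ,
    hℓa.trans (le_csSup (Set.finite_range Γ.lhd).bddAbove ha), fun v hv => ?_⟩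
  rw [Γ.lceilm_eq_lpred_lceil, hceil]
  refine ⟨habove v hv, fun hva => ?_, hbelow v hv⟩
  rw [hva, eq_div_iff hba.ne']
  ring

lemma dcond_eq_of_associatedWith {i i' : GrpI} {di di' : ((j : Fin N) → Xs j) → ℝ} {ℓ : ℝ}
    (h : Γ.AssociatedWith i di ℓ) (h' : Γ.AssociatedWith i' di' ℓ) {v : ℝ}
    (hv : v ∈ Γ.LVset) : Γ.dcond i di v = Γ.dcond i' di' v := by
  obtain ⟨hgt, heq, hlt⟩ := h.2.2 v hv
  obtain ⟨hgt', heq', hlt'⟩ := h'.2.2 v hv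
  rcases lt_trichotomy v (Γ.lceil ℓ) with hv | hv | hv
  · rw [hlt hv, hlt' hv]
  · rw [heq hv, heq' hv]
  · rw [hgt hv, hgt' hv]

variable {Γ} in
lemma AssociatedWith.congr {i i' : GrpI} {di di' : ((j : Fin N) → Xs j) → ℝ} {ℓ : ℝ}
    (h : Γ.AssociatedWith i di ℓ) (hd : ∀ v ∈ Γ.LVset, Γ.dcond i di v = Γ.dcond i' di' v) :
    Γ.AssociatedWith i' di' ℓ :=
  ⟨h.1, h.2.1, fun v hv => by simpa only [hd v hv] using h.2.2 v hv⟩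

lemma fair_of_isThresholdOn {d : GrpI → ((j : Fin N) → Xs j) → ℝ}
    (hw : IsThresholdOn Γ.lhdValues (Γ.dcond GrpI.w (d GrpI.w)))
    (hwb : Set.EqOn (Γ.dcond GrpI.w (d GrpI.w)) (Γ.dcond GrpI.b (d GrpI.b)) Γ.lhdValues) :
    Γ.Fair d := by
  obtain ⟨a, ha, habove, hbelow, hpivot⟩ := hw.exists_pivot Γ.lhdValues_nonempty
  simp only [mem_lhdValues] at ha habove hbelow hpivot
  have hassoc := Γ.associatedWith_of_pivot ha habove hbelow (hw.1 a (Γ.mem_lhdValues.2 ha))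
    hpivot
  exact ⟨_, hassoc, hassoc.congr fun v hv => hwb (Γ.mem_lhdValues.2 hv)⟩

end Game

/-- **Lemma 2.** For any game and any cost-threshold pair,
`𝒮_k(μ_RE, f_RE) ⊆ ℱ ⊆ k(X, μ_RE, f_RE)`, where `k` is the equal opportunity
control and `ℱ` is the set of fair decision policies. -/
theorem firm_optimal_subset_fair_subset_control
    {N : ℕ} {Xs : Fin N → Type} [∀ j, Fintype (Xs j)] [∀ j, Nonempty (Xs j)]
    (Γ : Game N Xs) (c : GrpI → ℝ) :
    Γ.Smax (fun μ f => EOset μ f) (Γ.muRE c) (Γ.fRE c) ⊆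
        {d | IsPolicy d ∧ Γ.Fair d} ∧
      {d | IsPolicy d ∧ Γ.Fair d} ⊆ EOset (Γ.muRE c) (Γ.fRE c) := by
  have hTP : ∀ d i, TP i d (Γ.muRE c) (Γ.fRE c) =
      ∑ v ∈ Γ.lhdValues, Γ.lhdWeight v * Γ.dcond i (d i) v := fun d i => by
    rw [Γ.TP_muRE_fRE, Γ.sum_p_q_mul_eq_sum_lhdWeight_mul_dcond]
  constructor
  · intro d hd
    have hth := Γ.isThresholdOn_dcond_of_mem_Smax hd
    have hEO := hd.1.2
    rw [hTP, hTP] at hEO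
    exact ⟨hd.1.1, Γ.fair_of_isThresholdOn (hth GrpI.w) ((hth GrpI.w).eqOn_of_sum_mul_eq
      (hth GrpI.b) (fun v hv => Γ.lhdWeight_pos (Γ.mem_lhdValues.1 hv)) hEO)⟩
  · rintro d ⟨hdp, ℓ, hw, hb⟩
    refine ⟨hdp, ?_⟩
    rw [hTP, hTP]
    exact Finset.sum_congr rfl fun v hv => by
      rw [Γ.dcond_eq_of_associatedWith hw hb (Γ.mem_lhdValues.1 hv)]
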